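/- arXiv:1611.02475 — 2 statements merged into one kernel-verified Lean document; each statement's English description precedes it below -/
import Mathlib

section
/- Let F_q ⊆ K be a field extension of degree 3, let a ∈ K with a ∉ F_q, and let k ∈ F_q with k ∉ {0, 1, −1}. Suppose A, B, C, D, E, F ∈ F_q satisfy A·a⁴ + B·a³ + C·a² + D·a² + E·a + F = 0 and A·k²·a⁴ + B·k²·a³ + C·k²·a² + D·k·a² + E·k·a + F = 0. Then A = B = C = D = E = F = 0. -/
open Polynomial

lemma quad_vanish
    (Fq : Type*) [Field Fq] (K : Type*) [Field K] [Algebra Fq K]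
    (hK : Module.finrank Fq K = 3)
    (a : K) (ha : a ∉ Set.range (algebraMap Fq K))
    (α β γ : Fq)
    (h : algebraMap Fq K α * a ^ 2 + algebraMap Fq K β * a + algebraMap Fq K γ = 0) :
    α = 0 ∧ β = 0 ∧ γ = 0 := by
  have hfd : FiniteDimensional Fq K := FiniteDimensional.of_finrank_pos (by omega)
  have hint : IsIntegral Fq a := Algebra.IsIntegral.isIntegral a
  by_contra hcon
  have hp : (C α * X ^ 2 + C β * X + C γ : Fq[X]) ≠ 0 := by
    intro h0
    apply hcon
    refine ⟨?_, ?_, ?_⟩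
    · simpa using congrArg (fun p => Polynomial.coeff p 2) h0
    · simpa using congrArg (fun p => Polynomial.coeff p 1) h0
    · simpa using congrArg (fun p => Polynomial.coeff p 0) h0
  have heval : Polynomial.aeval a (C α * X ^ 2 + C β * X + C γ : Fq[X]) = 0 := by
    rw [map_add, map_add, map_mul, map_pow, Polynomial.aeval_X, Polynomial.aeval_C,
      map_mul, Polynomial.aeval_X, Polynomial.aeval_C, Polynomial.aeval_C]
    exact h
  have hdeg : (minpoly Fq a).degree ≤ (C α * X ^ 2 + C β * X + C γ : Fq[X]).degree :=
    minpoly.degree_le_of_ne_zero Fq a hp heval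
  have hdeg2 : (C α * X ^ 2 + C β * X + C γ : Fq[X]).degree ≤ 2 := by
    compute_degree
  have hnd : (minpoly Fq a).natDegree ≤ 2 :=
    Polynomial.natDegree_le_iff_degree_le.mpr (le_trans hdeg hdeg2)
  have hdvd : (minpoly Fq a).natDegree ∣ 3 := hK ▸ minpoly.degree_dvd hint
  have hne1 : (minpoly Fq a).natDegree ≠ 1 := fun h1 =>
    ha ((minpoly.natDegree_eq_one_iff).mp h1)
  rcases (Nat.dvd_prime Nat.prime_three).mp hdvd with h3 | h3
  · exact hne1 h3
  · omega

theorem conic_coefficients_vanish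
    (Fq : Type*) [Field Fq] (K : Type*) [Field K] [Algebra Fq K]
    (hK : Module.finrank Fq K = 3)
    (a : K) (ha : a ∉ Set.range (algebraMap Fq K))
    (k : Fq) (hk0 : k ≠ 0) (hk1 : k ≠ 1) (hkm1 : k ≠ -1)
    (A B C D E F : Fq)
    (h1 : algebraMap Fq K A * a ^ 4 + algebraMap Fq K B * a ^ 3 +
      algebraMap Fq K C * a ^ 2 + algebraMap Fq K D * a ^ 2 +
      algebraMap Fq K E * a + algebraMap Fq K F = 0)
    (h2 : algebraMap Fq K (A * k ^ 2) * a ^ 4 + algebraMap Fq K (B * k ^ 2) * a ^ 3 +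
      algebraMap Fq K (C * k ^ 2) * a ^ 2 + algebraMap Fq K (D * k) * a ^ 2 +
      algebraMap Fq K (E * k) * a + algebraMap Fq K F = 0) :
    A = 0 ∧ B = 0 ∧ C = 0 ∧ D = 0 ∧ E = 0 ∧ F = 0 := by
  have ha0 : a ≠ 0 := by
    rintro rfl
    exact ha ⟨0, by simp⟩
  -- subtract k² * h1 - h2
  have hsub : algebraMap Fq K (D * (k ^ 2 - k)) * a ^ 2 +
      algebraMap Fq K (E * (k ^ 2 - k)) * a + algebraMap Fq K (F * (k ^ 2 - 1)) = 0 := by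
    have := congrArg (fun x => algebraMap Fq K (k ^ 2) * x) h1
    simp only [mul_zero] at this
    have h3 : algebraMap Fq K (k^2) * (algebraMap Fq K A * a ^ 4 + algebraMap Fq K B * a ^ 3 +
      algebraMap Fq K C * a ^ 2 + algebraMap Fq K D * a ^ 2 +
      algebraMap Fq K E * a + algebraMap Fq K F) - (algebraMap Fq K (A * k ^ 2) * a ^ 4 + algebraMap Fq K (B * k ^ 2) * a ^ 3 +
      algebraMap Fq K (C * k ^ 2) * a ^ 2 + algebraMap Fq K (D * k) * a ^ 2 +
      algebraMap Fq K (E * k) * a + algebraMap Fq K F) = 0 := by rw [h1, h2]; ring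
    rw [← h3]
    simp only [map_mul, map_sub, map_pow, map_one]
    ring
  obtain ⟨hD', hE', hF'⟩ := quad_vanish Fq K hK a ha _ _ _ hsub
  have hkk : k ^ 2 - k ≠ 0 := by
    intro h; apply hk1; have : k * (k - 1) = 0 := by ring_nf; linear_combination h
    rcases mul_eq_zero.mp this with h' | h'
    · exact absurd h' hk0
    · exact absurd (sub_eq_zero.mp h') (by simpa using hk1)
  have hk21 : k ^ 2 - 1 ≠ 0 := by
    intro h
    have : (k - 1) * (k + 1) = 0 := by linear_combination h
    rcases mul_eq_zero.mp this with h' | h'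
    · exact hk1 (sub_eq_zero.mp h')
    · exact hkm1 (eq_neg_of_add_eq_zero_left h')
  have hD : D = 0 := by rcases mul_eq_zero.mp hD' with h | h; exacts [h, absurd h hkk]
  have hE : E = 0 := by rcases mul_eq_zero.mp hE' with h | h; exacts [h, absurd h hkk]
  have hF : F = 0 := by rcases mul_eq_zero.mp hF' with h | h; exacts [h, absurd h hk21]
  subst hD hE hF
  -- now h1 : A a⁴ + B a³ + C a² = 0, divide by a²
  have h1' : a ^ 2 * (algebraMap Fq K A * a ^ 2 + algebraMap Fq K B * a + algebraMap Fq K C) = 0 := by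
    rw [← h1]; simp only [map_zero]; ring
  have hquad : algebraMap Fq K A * a ^ 2 + algebraMap Fq K B * a + algebraMap Fq K C = 0 := by
    rcases mul_eq_zero.mp h1' with h | h
    · exact absurd (pow_eq_zero_iff (by norm_num) |>.mp h) ha0
    · exact h
  obtain ⟨hA, hB, hC⟩ := quad_vanish Fq K hK a ha _ _ _ hquad
  exact ⟨hA, hB, hC, rfl, rfl, rfl⟩
end

section
/- Let K be a field with 8 elements and ξ ∈ K with ξ³ = ξ + 1. Then the point (ξ : ξ² : ξ⁴ : 1) is a singular point of the surface F(x,y,z,t) = x²y + y²z + z²x + (xy + xz + yz)t + t³ = 0 over K; that is, F and all four partial derivatives ∂F/∂x, ∂F/∂y, ∂F/∂z, ∂F/∂t vanish at (ξ, ξ², ξ⁴, 1). -/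
open MvPolynomial in
theorem singular_point_of_candidate_surface_over_F8
    (K : Type*) [Field K] [Fintype K] (hK : Fintype.card K = 8)
    (ξ : K) (hξ : ξ ^ 3 = ξ + 1) :
    let F : MvPolynomial (Fin 4) K :=
      X 0 ^ 2 * X 1 + X 1 ^ 2 * X 2 + X 2 ^ 2 * X 0 +
        (X 0 * X 1 + X 0 * X 2 + X 1 * X 2) * X 3 + X 3 ^ 3
    let v : Fin 4 → K := ![ξ, ξ ^ 2, ξ ^ 4, 1]
    eval v F = 0 ∧ ∀ i : Fin 4, eval v (pderiv i F) = 0 := by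
  have h8 : (8 : K) = 0 := by
    have := FiniteField.cast_card_eq_zero K
    rwa [hK] at this
  have h2 : (2 : K) = 0 := by
    have : (2 : K) ^ 3 = 0 := by norm_num; linear_combination h8
    exact pow_eq_zero_iff (by norm_num) |>.mp this
  intro F v
  refine ⟨?_, ?_⟩
  · simp only [F, v]
    simp
    linear_combination (7 + 5*ξ + 3*ξ^2 + 3*ξ^3 + ξ^4 + ξ^5 + ξ^6) * hξ + (4 + 6*ξ + 4*ξ^2) * h2
  · intro i
    fin_cases i <;> simp [F, v, pderiv_X, pderiv_mul, pderiv_pow]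
    · linear_combination (4 + 2*ξ + ξ^2 + ξ^3 + ξ^5) * hξ + (2 + 3*ξ + 2*ξ^2) * h2
    · linear_combination (2 + 3*ξ + 2*ξ^3) * hξ + (1 + 3*ξ + 2*ξ^2) * h2
    · linear_combination (2 + ξ + 2*ξ^2) * hξ + (1 + 2*ξ + 2*ξ^2) * h2
    · linear_combination (3 + ξ + ξ^2 + ξ^3) * hξ + (3 + 2*ξ + ξ^2) * h2
end
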